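/- Let α > 0, β > 0, p ∈ [0,1], r > 0 and z ∈ (0,1). Then the r-th incomplete moment of the RTUOMG distribution satisfies ∫₀^z x^r f(x) dx = 2α(1−p)·∑_{i=0}^∞ ((α+1)_i (−1)^i / i!)·B_{z^β}(r/β + 1 + i, α) + 4pα²·∑_{k=1}^∞ (1/(2k−1))·∑_{i=0}^∞ ((α+1)_i (−1)^i / i!)·B_{z^β}(r/β + 2k + i, α), where all series converge. -/

import Mathlib

/-- The omega function `ω(x) = ((1 + x^β)/(1 - x^β))^{-α}` on `(0,1)`. -/
noncomputable def omegaFn (α β x : ℝ) : ℝ := ((1 + x ^ β) / (1 - x ^ β)) ^ (-α)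

/-- The RTUOMG probability density function
`f(x) = (2αβ x^{β-1}/(1 - x^{2β})) ω(x) (1 - p - p log ω(x))`. -/
noncomputable def rtuomgPDF (α β p x : ℝ) : ℝ :=
  2 * α * β * x ^ (β - 1) / (1 - x ^ (2 * β)) * omegaFn α β x *
    (1 - p - p * Real.log (omegaFn α β x))

/-- The incomplete Beta function `B_λ(m,n) = ∫₀^λ t^{m-1}(1-t)^{n-1} dt`. -/
noncomputable def incBeta (lam m n : ℝ) : ℝ :=
  ∫ t in (0:ℝ)..lam, t ^ (m - 1) * (1 - t) ^ (n - 1)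

/-!
Substituting `t = x ^ β` turns the incomplete moment into
`∫₀^{z^β} t^{r/β} (1-t)^{α-1} (1+t)^{-(α+1)} (2α(1-p) + 2pα² log((1+t)/(1-t))) dt`.
Expanding `(1+t)^{-(α+1)}` by the binomial series and `log((1+t)/(1-t))` by the odd power series
`2 ∑ t^{2k+1}/(2k+1)` and integrating term by term gives incomplete Beta functions. Both series
converge absolutely and uniformly on `[0, z^β]` because `z^β < 1`, which justifies the
interchanges by dominated convergence.
-/

open Real Set MeasureTheory intervalIntegral
open scoped Nat

theorem ascPochhammer_eval_mul_neg_one_pow_div_factorial {K : Type*} [Field K] [CharZero K]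
    (s : K) (n : ℕ) : (ascPochhammer K n).eval s * (-1) ^ n / n ! = Ring.choose (-s) n := by
  have h := Ring.factorial_nsmul_multichoose_eq_ascPochhammer s n
  rw [Polynomial.ascPochhammer_smeval_eq_eval, nsmul_eq_mul] at h
  rw [Ring.choose_neg', ← h, Units.smul_def, zsmul_eq_mul, Int.cast_negOnePow_natCast]
  field_simp [Nat.cast_ne_zero.2 n.factorial_ne_zero]

namespace Real

theorem mem_eball_zero_one_of_abs_lt_one {t : ℝ} (ht : |t| < 1) : t ∈ Metric.eball (0 : ℝ) 1 := by
  rwa [Metric.mem_eball, edist_zero_right, ← ofReal_norm, ENNReal.ofReal_lt_one]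

theorem hasSum_choose_mul_pow (a : ℝ) {t : ℝ} (ht : |t| < 1) :
    HasSum (fun n ↦ Ring.choose a n * t ^ n) ((1 + t) ^ a) := by
  simpa [binomialSeries, FormalMultilinearSeries.ofScalars_apply_eq, mul_comm] using
    one_add_rpow_hasFPowerSeriesOnBall_zero.hasSum (mem_eball_zero_one_of_abs_lt_one ht)

theorem summable_abs_choose_mul_pow (a : ℝ) {x : ℝ} (hx0 : 0 ≤ x) (hx1 : x < 1) :
    Summable fun n ↦ |Ring.choose a n| * x ^ n := by
  have hx : x ∈ Metric.eball 0 (binomialSeries ℝ a).radius :=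
    Metric.eball_subset_eball binomialSeries_radius_ge_one
      (mem_eball_zero_one_of_abs_lt_one (by rwa [abs_of_nonneg hx0]))
  simpa [binomialSeries, FormalMultilinearSeries.ofScalars_apply_eq, abs_of_nonneg hx0, mul_comm]
    using (binomialSeries ℝ a).summable_norm_apply hx

end Real

theorem hasSum_mul_intervalIntegral_mul {μ : Measure ℝ} {a b : ℝ} {g S : ℝ → ℝ} {c M : ℕ → ℝ}
    {v : ℕ → ℝ → ℝ} (hg : IntervalIntegrable g μ a b) (hv : ∀ n, Continuous (v n))
    (hvM : ∀ n, ∀ t ∈ uIoc a b, ‖v n t‖ ≤ M n) (hM : Summable fun n ↦ ‖c n‖ * M n)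
    (hS : ∀ t ∈ uIoc a b, HasSum (fun n ↦ c n * v n t) (S t)) :
    HasSum (fun n ↦ c n * ∫ t in a..b, g t * v n t ∂μ) (∫ t in a..b, g t * S t ∂μ) := by
  have key := hasSum_integral_of_dominated_convergence (μ := μ)
    (F := fun n t ↦ g t * (c n * v n t)) (fun n t ↦ ‖c n‖ * M n * ‖g t‖)
    (fun n ↦ hg.def'.aestronglyMeasurable.mul
      (continuous_const.mul (hv n)).aestronglyMeasurable)
    (fun n ↦ ae_of_all _ fun t ht ↦ by
      rw [norm_mul, norm_mul, mul_comm]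
      gcongr
      exact hvM n t ht)
    (ae_of_all _ fun t _ ↦ hM.mul_right _)
    (by simpa only [tsum_mul_right] using hg.norm.const_mul _)
    (ae_of_all _ fun t ht ↦ (hS t ht).mul_left (g t))
  simpa only [mul_left_comm (g _), intervalIntegral.integral_const_mul] using key

theorem intervalIntegrable_rpow_mul_one_sub_rpow_mul_one_add_rpow (a b : ℝ) {lam m : ℝ}
    (hl0 : 0 ≤ lam) (hl1 : lam < 1) (hm : -1 < m) :
    IntervalIntegrable (fun t ↦ t ^ m * (1 - t) ^ b * (1 + t) ^ a) volume 0 lam := by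
  refine ((intervalIntegrable_rpow' hm).mul_continuousOn ?_).mul_continuousOn ?_ <;>
    rw [uIcc_of_le hl0] <;>
    exact ContinuousOn.rpow_const (by fun_prop) fun t ht ↦ Or.inl (by grind)

theorem hasSum_choose_mul_incBeta (a b : ℝ) {lam m : ℝ} (hl0 : 0 ≤ lam) (hl1 : lam < 1)
    (hm : 0 < m) :
    HasSum (fun i : ℕ ↦ Ring.choose a i * incBeta lam (m + i) b)
      (∫ t in (0:ℝ)..lam, t ^ (m - 1) * (1 - t) ^ (b - 1) * (1 + t) ^ a) := by
  have hg : IntervalIntegrable (fun t ↦ t ^ (m - 1) * (1 - t) ^ (b - 1)) volume 0 lam :=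
    (intervalIntegrable_rpow' (by linarith)).mul_continuousOn <| by
      rw [uIcc_of_le hl0]
      exact ContinuousOn.rpow_const (by fun_prop) fun t ht ↦ Or.inl (by grind)
  have hsum := hasSum_mul_intervalIntegral_mul (c := fun i ↦ Ring.choose a i)
    (v := fun i t ↦ t ^ i) (M := fun i ↦ lam ^ i) (S := fun t ↦ (1 + t) ^ a) hg
    (fun i ↦ continuous_pow i)
    (fun i t ht ↦ by
      rw [uIoc_of_le hl0] at ht
      rw [norm_pow, norm_of_nonneg ht.1.le]
      exact pow_le_pow_left₀ ht.1.le ht.2 i)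
    (by simpa only [norm_eq_abs] using summable_abs_choose_mul_pow a hl0 hl1)
    (fun t ht ↦ by
      rw [uIoc_of_le hl0] at ht
      exact hasSum_choose_mul_pow a (by rw [abs_of_pos ht.1]; linarith [ht.2]))
  convert hsum using 3 with i
  rw [incBeta]
  refine integral_congr_ae (ae_of_all _ fun t ht ↦ ?_)
  rw [uIoc_of_le hl0] at ht
  rw [show m + i - 1 = m - 1 + i by ring, rpow_add_natCast ht.1.ne']
  ring

theorem hasSum_mul_intervalIntegral_mul_log_sub_log {μ : Measure ℝ} {g : ℝ → ℝ} {lam : ℝ}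
    (hl0 : 0 ≤ lam) (hl1 : lam < 1) (hg : IntervalIntegrable g μ 0 lam) :
    HasSum (fun k : ℕ ↦ 2 * (1 / (2 * k + 1)) * ∫ t in (0:ℝ)..lam, g t * t ^ (2 * k + 1) ∂μ)
      (∫ t in (0:ℝ)..lam, g t * (log (1 + t) - log (1 - t)) ∂μ) := by
  refine hasSum_mul_intervalIntegral_mul hg (fun k ↦ continuous_pow _)
    (M := fun k ↦ lam ^ (2 * k + 1))
    (fun k t ht ↦ by
      rw [uIoc_of_le hl0] at ht
      rw [norm_pow, norm_of_nonneg ht.1.le]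
      exact pow_le_pow_left₀ ht.1.le ht.2 _)
    ?_
    (fun t ht ↦ by
      rw [uIoc_of_le hl0] at ht
      exact hasSum_log_sub_log_of_abs_lt_one (by rw [abs_of_pos ht.1]; linarith [ht.2]))
  have hlam := (hasSum_log_sub_log_of_abs_lt_one (by rwa [abs_of_nonneg hl0])).summable
  refine hlam.congr fun k ↦ ?_
  rw [norm_of_nonneg (by positivity)]

theorem hasSum_inv_mul_tsum_choose_mul_incBeta (a b : ℝ) {lam m : ℝ} (hl0 : 0 ≤ lam)
    (hl1 : lam < 1) (hm : -1 < m) :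
    HasSum (fun k : ℕ ↦ 1 / (2 * ((k : ℝ) + 1) - 1) *
        ∑' i : ℕ, Ring.choose a i * incBeta lam (m + 2 * ((k : ℝ) + 1) + i) b)
      (1 / 2 * ∫ t in (0:ℝ)..lam,
        t ^ m * (1 - t) ^ (b - 1) * (1 + t) ^ a * (log (1 + t) - log (1 - t))) := by
  have hg := intervalIntegrable_rpow_mul_one_sub_rpow_mul_one_add_rpow a (b - 1) hl0 hl1 hm
  refine ((hasSum_mul_intervalIntegral_mul_log_sub_log hl0 hl1 hg).mul_left (1 / 2)).congr_fun
    fun k ↦ ?_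
  have hk : 0 < m + 2 * ((k : ℝ) + 1) := by linarith [k.cast_nonneg (α := ℝ)]
  have hshift : ∫ t in (0:ℝ)..lam, t ^ (m + 2 * ((k : ℝ) + 1) - 1) * (1 - t) ^ (b - 1) * (1 + t) ^ a
      = ∫ t in (0:ℝ)..lam, t ^ m * (1 - t) ^ (b - 1) * (1 + t) ^ a * t ^ (2 * k + 1) := by
    refine integral_congr_ae (ae_of_all _ fun t ht ↦ ?_)
    rw [uIoc_of_le hl0] at ht
    rw [show m + 2 * ((k : ℝ) + 1) - 1 = m + ↑(2 * k + 1) by push_cast; ring,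
      rpow_add_natCast ht.1.ne']
    ring
  rw [(hasSum_choose_mul_incBeta a b hl0 hl1 hk).tsum_eq, hshift]
  ring

theorem rtuomgPDF_eq {α β p x : ℝ} (hβ : 0 < β) (hx0 : 0 < x) (hx1 : x < 1) :
    rtuomgPDF α β p x = β * x ^ (β - 1) * (2 * α * (1 - x ^ β) ^ (α - 1) *
      (1 + x ^ β) ^ (-(α + 1)) * (1 - p + p * α * (log (1 + x ^ β) - log (1 - x ^ β)))) := by
  have ht1 : 0 < 1 - x ^ β := sub_pos.2 (rpow_lt_one hx0.le hx1 hβ)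
  have ht2 : 0 < 1 + x ^ β := by positivity
  have hsq : 1 - x ^ (2 * β) = (1 - x ^ β) * (1 + x ^ β) := by
    rw [mul_comm, rpow_mul hx0.le, rpow_two]; ring
  have homega : omegaFn α β x = (1 - x ^ β) ^ α * (1 + x ^ β) ^ (-α) := by
    rw [omegaFn, div_rpow ht2.le ht1.le, rpow_neg ht1.le, rpow_neg ht2.le]
    field_simp
  have hlog : log (omegaFn α β x) = -α * (log (1 + x ^ β) - log (1 - x ^ β)) := by
    rw [omegaFn, log_rpow (div_pos ht2 ht1), log_div ht2.ne' ht1.ne']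
  rw [rtuomgPDF, hlog, homega, hsq, rpow_sub_one ht1.ne', neg_add, rpow_add ht2, rpow_neg_one]
  field_simp
  ring

theorem integral_rpow_mul_rtuomgPDF_eq_integral (α p : ℝ) {β r z : ℝ} (hβ : 0 < β)
    (hz0 : 0 ≤ z) (hz1 : z < 1) :
    ∫ x in (0:ℝ)..z, x ^ r * rtuomgPDF α β p x =
      ∫ t in (0:ℝ)..z ^ β, t ^ (r / β) * (1 - t) ^ (α - 1) * (1 + t) ^ (-(α + 1)) *
        (2 * α * (1 - p) + 2 * p * α ^ 2 * (log (1 + t) - log (1 - t))) := by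
  have hsubst := integral_deriv_smul_comp_of_deriv_nonneg (a := 0) (b := z)
    (f := fun x ↦ x ^ β) (f' := fun x ↦ β * x ^ (β - 1))
    (g := fun t ↦ t ^ (r / β) * (1 - t) ^ (α - 1) * (1 + t) ^ (-(α + 1)) *
        (2 * α * (1 - p) + 2 * p * α ^ 2 * (log (1 + t) - log (1 - t))))
    (continuous_rpow_const hβ.le).continuousOn
    (fun x hx ↦ hasDerivAt_rpow_const (Or.inl (by rw [min_eq_left hz0] at hx; exact hx.1.ne')))
    (fun x hx ↦ by rw [min_eq_left hz0] at hx; have := hx.1; positivity)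
  rw [zero_rpow hβ.ne'] at hsubst
  rw [← hsubst]
  refine integral_congr_ae (ae_of_all _ fun x hx ↦ ?_)
  rw [uIoc_of_le hz0] at hx
  rw [rtuomgPDF_eq hβ hx.1 (hx.2.trans_lt hz1), smul_eq_mul, Function.comp_apply,
    ← rpow_mul hx.1.le, mul_div_cancel₀ r hβ.ne']
  ring

theorem integral_rpow_mul_rtuomgPDF (α p : ℝ) {β r z : ℝ} (hβ : 0 < β) (hr : -β < r)
    (hz0 : 0 ≤ z) (hz1 : z < 1) :
    ∫ x in (0:ℝ)..z, x ^ r * rtuomgPDF α β p x =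
      2 * α * (1 - p) * (∫ t in (0:ℝ)..z ^ β,
          t ^ (r / β) * (1 - t) ^ (α - 1) * (1 + t) ^ (-(α + 1))) +
        2 * p * α ^ 2 * ∫ t in (0:ℝ)..z ^ β,
          t ^ (r / β) * (1 - t) ^ (α - 1) * (1 + t) ^ (-(α + 1)) *
            (log (1 + t) - log (1 - t)) := by
  have hl0 : 0 ≤ z ^ β := rpow_nonneg hz0 β
  have hl1 : z ^ β < 1 := rpow_lt_one hz0 hz1 hβ
  have hm : -1 < r / β := by rwa [lt_div_iff₀ hβ, neg_one_mul]
  have hw := intervalIntegrable_rpow_mul_one_sub_rpow_mul_one_add_rpow (-(α + 1)) (α - 1) hl0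
    hl1 hm
  have hwlog := hw.mul_continuousOn (g := fun t ↦ log (1 + t) - log (1 - t)) <| by
    rw [uIcc_of_le hl0]
    fun_prop (disch := grind)
  rw [integral_rpow_mul_rtuomgPDF_eq_integral α p hβ hz0 hz1,
    ← intervalIntegral.integral_const_mul, ← intervalIntegral.integral_const_mul,
    ← integral_add (hw.const_mul _) (hwlog.const_mul _)]
  exact integral_congr fun t _ ↦ by ring

theorem rtuomg_incomplete_moment_general (α β p r z : ℝ) (hβ : 0 < β)
    (hr : 0 < r) (hz : z ∈ Set.Ioo (0:ℝ) 1) :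
    Summable (fun i : ℕ =>
      ((ascPochhammer ℝ i).eval (α + 1) * (-1 : ℝ) ^ i / (Nat.factorial i : ℝ)) *
        incBeta (z ^ β) (r / β + 1 + i) α) ∧
    (∀ k : ℕ, Summable (fun i : ℕ =>
      ((ascPochhammer ℝ i).eval (α + 1) * (-1 : ℝ) ^ i / (Nat.factorial i : ℝ)) *
        incBeta (z ^ β) (r / β + 2 * ((k : ℝ) + 1) + i) α)) ∧
    Summable (fun k : ℕ => (1 / (2 * ((k : ℝ) + 1) - 1)) *
      ∑' i : ℕ,
        ((ascPochhammer ℝ i).eval (α + 1) * (-1 : ℝ) ^ i / (Nat.factorial i : ℝ)) *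
          incBeta (z ^ β) (r / β + 2 * ((k : ℝ) + 1) + i) α) ∧
    (∫ x in (0:ℝ)..z, x ^ r * rtuomgPDF α β p x) =
      2 * α * (1 - p) *
        (∑' i : ℕ,
          ((ascPochhammer ℝ i).eval (α + 1) * (-1 : ℝ) ^ i / (Nat.factorial i : ℝ)) *
            incBeta (z ^ β) (r / β + 1 + i) α) +
      4 * p * α ^ 2 *
        ∑' k : ℕ, (1 / (2 * ((k : ℝ) + 1) - 1)) *
          ∑' i : ℕ,
            ((ascPochhammer ℝ i).eval (α + 1) * (-1 : ℝ) ^ i / (Nat.factorial i : ℝ)) *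
              incBeta (z ^ β) (r / β + 2 * ((k : ℝ) + 1) + i) α := by
  obtain ⟨hz0, hz1⟩ := hz
  have hl0 : 0 ≤ z ^ β := rpow_nonneg hz0.le β
  have hl1 : z ^ β < 1 := rpow_lt_one hz0.le hz1 hβ
  have hm : 0 < r / β := div_pos hr hβ
  have hbase := hasSum_choose_mul_incBeta (-(α + 1)) α hl0 hl1 (m := r / β + 1) (by positivity)
  rw [add_sub_cancel_right] at hbase
  have hlog := hasSum_inv_mul_tsum_choose_mul_incBeta (-(α + 1)) α hl0 hl1 (m := r / β)
    (by linarith)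
  simp only [ascPochhammer_eval_mul_neg_one_pow_div_factorial]
  refine ⟨hbase.summable,
    fun k ↦ (hasSum_choose_mul_incBeta _ α hl0 hl1 (by positivity)).summable, hlog.summable, ?_⟩
  rw [integral_rpow_mul_rtuomgPDF α p hβ (by linarith) hz0.le hz1, hbase.tsum_eq, hlog.tsum_eq]
  ring

/-- **Incomplete moments of the RTUOMG distribution (Proposition 2).**
For `α > 0`, `β > 0`, `p ∈ [0,1]`, `r > 0` and `z ∈ (0,1)`,
`∫₀^z x^r f(x) dx = 2α(1-p) ∑_{i=0}^∞ ((α+1)_i (-1)^i / i!) B_{z^β}(r/β+1+i, α)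
  + 4pα² ∑_{k=1}^∞ (1/(2k-1)) ∑_{i=0}^∞ ((α+1)_i (-1)^i / i!) B_{z^β}(r/β+2k+i, α)`,
all series being convergent. -/
theorem rtuomg_incomplete_moment (α β p r z : ℝ) (hα : 0 < α) (hβ : 0 < β)
    (hp : p ∈ Set.Icc (0:ℝ) 1) (hr : 0 < r) (hz : z ∈ Set.Ioo (0:ℝ) 1) :
    Summable (fun i : ℕ =>
      ((ascPochhammer ℝ i).eval (α + 1) * (-1 : ℝ) ^ i / (Nat.factorial i : ℝ)) *
        incBeta (z ^ β) (r / β + 1 + i) α) ∧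
    (∀ k : ℕ, Summable (fun i : ℕ =>
      ((ascPochhammer ℝ i).eval (α + 1) * (-1 : ℝ) ^ i / (Nat.factorial i : ℝ)) *
        incBeta (z ^ β) (r / β + 2 * ((k : ℝ) + 1) + i) α)) ∧
    Summable (fun k : ℕ => (1 / (2 * ((k : ℝ) + 1) - 1)) *
      ∑' i : ℕ,
        ((ascPochhammer ℝ i).eval (α + 1) * (-1 : ℝ) ^ i / (Nat.factorial i : ℝ)) *
          incBeta (z ^ β) (r / β + 2 * ((k : ℝ) + 1) + i) α) ∧
    (∫ x in (0:ℝ)..z, x ^ r * rtuomgPDF α β p x) =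
      2 * α * (1 - p) *
        (∑' i : ℕ,
          ((ascPochhammer ℝ i).eval (α + 1) * (-1 : ℝ) ^ i / (Nat.factorial i : ℝ)) *
            incBeta (z ^ β) (r / β + 1 + i) α) +
      4 * p * α ^ 2 *
        ∑' k : ℕ, (1 / (2 * ((k : ℝ) + 1) - 1)) *
          ∑' i : ℕ,
            ((ascPochhammer ℝ i).eval (α + 1) * (-1 : ℝ) ^ i / (Nat.factorial i : ℝ)) *
              incBeta (z ^ β) (r / β + 2 * ((k : ℝ) + 1) + i) α :=
  rtuomg_incomplete_moment_general α β p r z hβ hr hz
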